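/- The associativity bijection ((a₁,a₂),b) ↦ (a₁,(a₂,b)) gives an isomorphism in the category NUTS between (X₁ ⊗ X₂) ⊸ Y and X₁ ⊸ (X₂ ⊸ Y), i.e. a relation t is total in (X₁ ⊗ X₂) ⊸ Y iff its curried form is total in X₁ ⊸ (X₂ ⊸ Y). -/

import Mathlib

/-- Orthogonal of a set of subsets: nonempty-intersection duality. -/
def orth {α : Type*} (T : Set (Set α)) : Set (Set α) :=
  {u' : Set α | ∀ u ∈ T, (u ∩ u').Nonempty}

/-- Direct image of a set under a relation. -/
def relIm {α β : Type*} (t : Set (α × β)) (u : Set α) : Set β :=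
  {b | ∃ a ∈ u, (a, b) ∈ t}

/-- The condition for a relation to be a NUTS morphism: it maps total sets
to total sets under direct image. -/
def isTot {α β : Type*} (TX : Set (Set α)) (TY : Set (Set β)) (t : Set (α × β)) : Prop :=
  ∀ u ∈ TX, relIm t u ∈ TY

/-- Totality of the tensor product: the upward closure of the set of products
of total sets. -/
def tensT {α β : Type*} (TX : Set (Set α)) (TY : Set (Set β)) : Set (Set (α × β)) :=
  {w | ∃ u ∈ TX, ∃ v ∈ TY, u ×ˢ v ⊆ w}

/-- Totality of the linear arrow `X ⊸ Y = (X ⊗ Y⊥)⊥`. -/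
def limplT {α β : Type*} (TX : Set (Set α)) (TY : Set (Set β)) : Set (Set (α × β)) :=
  orth (tensT TX (orth TY))

/-! The curried relation sends `u₁` then `u₂` to exactly the image of `u₁ ×ˢ u₂` under `t`.
Since `X ⊸ Y` is an orthogonal, its totality is biorthogonally closed, and a relation is total
in `X ⊸ Y` iff it sends total sets of `X` into `Y⊥⊥`. Unfolding both sides with these two facts
yields the same condition: `t` maps every `u₁ ×ˢ u₂` with `u₁`, `u₂` total into `Y⊥⊥`. -/

section Orth

variable {α : Type*}

lemma orth_anti {S T : Set (Set α)} (h : S ⊆ T) : orth T ⊆ orth S :=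
  fun _ hu' u hu => hu' u (h hu)

lemma subset_orth_orth (T : Set (Set α)) : T ⊆ orth (orth T) :=
  fun u hu w hw => Set.inter_comm u w ▸ hw u hu

lemma orth_orth_orth (T : Set (Set α)) : orth (orth (orth T)) = orth T :=
  (orth_anti (subset_orth_orth T)).antisymm (subset_orth_orth (orth T))

lemma mem_orth_of_subset {T : Set (Set α)} {u u' : Set α} (hu : u ∈ orth T) (h : u ⊆ u') :
    u' ∈ orth T :=
  fun w hw => (hu w hw).mono (Set.inter_subset_inter_right w h)

end Orth

lemma relIm_mono {α β : Type*} (t : Set (α × β)) {u u' : Set α} (h : u ⊆ u') :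
    relIm t u ⊆ relIm t u' :=
  fun _ ⟨a, ha, hab⟩ => ⟨a, h ha, hab⟩

section Limpl

variable {α β γ : Type*}

lemma orth_orth_limplT (TX : Set (Set α)) (TY : Set (Set β)) :
    orth (orth (limplT TX TY)) = limplT TX TY :=
  orth_orth_orth _

lemma mem_limplT {TX : Set (Set α)} {TY : Set (Set β)} {t : Set (α × β)} :
    t ∈ limplT TX TY ↔ ∀ u ∈ TX, relIm t u ∈ orth (orth TY) := by
  constructor
  · intro ht u hu v hv
    obtain ⟨⟨a, b⟩, ⟨ha, hb⟩, hab⟩ := ht (u ×ˢ v) ⟨u, hu, v, hv, subset_rfl⟩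
    exact ⟨b, hb, a, ha, hab⟩
  · rintro h w ⟨u, hu, v, hv, huv⟩
    obtain ⟨b, hb, a, ha, hab⟩ := h u hu v hv
    exact ⟨(a, b), huv ⟨ha, hb⟩, hab⟩

lemma mem_limplT_tensT {TX₁ : Set (Set α)} {TX₂ : Set (Set β)} {TY : Set (Set γ)}
    {t : Set ((α × β) × γ)} :
    t ∈ limplT (tensT TX₁ TX₂) TY ↔
      ∀ u₁ ∈ TX₁, ∀ u₂ ∈ TX₂, relIm t (u₁ ×ˢ u₂) ∈ orth (orth TY) := by
  rw [mem_limplT]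
  constructor
  · exact fun h u₁ hu₁ u₂ hu₂ => h _ ⟨u₁, hu₁, u₂, hu₂, subset_rfl⟩
  · rintro h w ⟨u₁, hu₁, u₂, hu₂, hw⟩
    exact mem_orth_of_subset (h u₁ hu₁ u₂ hu₂) (relIm_mono t hw)

def relCurry (t : Set ((α × β) × γ)) : Set (α × (β × γ)) :=
  {q | ((q.1, q.2.1), q.2.2) ∈ t}

lemma relIm_relIm_relCurry (t : Set ((α × β) × γ)) (u₁ : Set α) (u₂ : Set β) :
    relIm (relIm (relCurry t) u₁) u₂ = relIm t (u₁ ×ˢ u₂) := by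
  ext c
  constructor
  · rintro ⟨b, hb, a, ha, hab⟩
    exact ⟨(a, b), ⟨ha, hb⟩, hab⟩
  · rintro ⟨⟨a, b⟩, ⟨ha, hb⟩, hab⟩
    exact ⟨b, hb, a, ha, hab⟩

end Limpl

theorem assoc_tens_limpl_general {α β γ : Type*}
    (TX₁ : Set (Set α)) (TX₂ : Set (Set β)) (TY : Set (Set γ))
    (t : Set ((α × β) × γ)) :
    t ∈ limplT (tensT TX₁ TX₂) TY ↔
      {q : α × (β × γ) | ((q.1, q.2.1), q.2.2) ∈ t} ∈
        limplT TX₁ (limplT TX₂ TY) := by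
  change _ ↔ relCurry t ∈ _
  rw [mem_limplT_tensT]
  simp only [mem_limplT, orth_orth_limplT, relIm_relIm_relCurry]

/-- The associativity bijection `((a₁,a₂),b) ↦ (a₁,(a₂,b))` is an isomorphism
in `NUTS` from `(X₁ ⊗ X₂) ⊸ Y` to `X₁ ⊸ (X₂ ⊸ Y)`: a relation `t` is total
in `(X₁ ⊗ X₂) ⊸ Y` iff its curried form is total in `X₁ ⊸ (X₂ ⊸ Y)`. -/
theorem assoc_tens_limpl {α β γ : Type*}
    (TX₁ : Set (Set α)) (TX₂ : Set (Set β)) (TY : Set (Set γ))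
    (hX₁ : TX₁ = orth (orth TX₁)) (hX₂ : TX₂ = orth (orth TX₂))
    (hY : TY = orth (orth TY)) (t : Set ((α × β) × γ)) :
    t ∈ limplT (tensT TX₁ TX₂) TY ↔
      {q : α × (β × γ) | ((q.1, q.2.1), q.2.2) ∈ t} ∈
        limplT TX₁ (limplT TX₂ TY) :=
  assoc_tens_limpl_general TX₁ TX₂ TY t
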